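/- arXiv:2505.22442 — 3 statements merged into one kernel-verified Lean document; each statement's English description precedes it below -/
import Mathlib

section
/- Let γ ∈ [0,1), let r_min ≤ r_max be real numbers, and for each i ∈ ℕ let X_i be a measurable space, P_i and Q_i probability measures on X_i, and r_i : X_i → ℝ a measurable function with r_min ≤ r_i ≤ r_max. Then |∑_{i=0}^∞ γ^i (∫ r_i dP_i − ∫ r_i dQ_i)| ≤ ((r_max − r_min)/(1 − γ)) · ∑_{i=0}^∞ (1 − γ) γ^i · TV(P_i, Q_i), where both series converge absolutely. -/
/-!
A reward bounded in `[a, b]` is, up to the constant `a` (which integrates to the same value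
against two probability measures), a function `g` with values in `[0, b - a]`. By the layer-cake
formula `∫ g dP - ∫ g dQ = ∫₀^{b-a} (P{g ≥ t} - Q{g ≥ t}) dt`, and the integrand is pointwise at most
`TV(P, Q)`, so `|∫ r dP - ∫ r dQ| ≤ (b - a) TV(P, Q)`. Since `0 ≤ TV ≤ 1`, multiplying by `γ^i`
and summing against the geometric series gives absolute convergence and the discounted bound.
-/

open MeasureTheory

/-- Total variation distance between two measures:
`TV(P,Q) = sup over measurable sets E of |P(E) - Q(E)|`. -/
noncomputable def tvDist {X : Type*} [MeasurableSpace X] (P Q : Measure X) : ℝ :=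
  ⨆ E : {E : Set X // MeasurableSet E}, |(P E.1).toReal - (Q E.1).toReal|

open Set

section TotalVariation

variable {X : Type*} [MeasurableSpace X] (P Q : Measure X)

lemma tvDist_nonneg : 0 ≤ tvDist P Q :=
  Real.iSup_nonneg fun _ => abs_nonneg _

variable [IsProbabilityMeasure P] [IsProbabilityMeasure Q]

lemma abs_measureReal_sub_le_one (E : Set X) : |P.real E - Q.real E| ≤ 1 :=
  abs_sub_le_of_nonneg_of_le measureReal_nonneg measureReal_le_one measureReal_nonneg
    measureReal_le_one

lemma tvDist_le_one : tvDist P Q ≤ 1 :=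
  ciSup_le fun E => abs_measureReal_sub_le_one P Q E.1

lemma abs_measureReal_sub_le_tvDist {E : Set X} (hE : MeasurableSet E) :
    |P.real E - Q.real E| ≤ tvDist P Q :=
  le_ciSup (f := fun E : {E : Set X // MeasurableSet E} => |P.real E.1 - Q.real E.1|)
    ⟨1, forall_mem_range.2 fun E => abs_measureReal_sub_le_one P Q E.1⟩ ⟨E, hE⟩

end TotalVariation

section LayerCake

variable {X : Type*} [MeasurableSpace X] (P Q : Measure X) {f : X → ℝ}

lemma integrableOn_measureReal_setOf_le (μ : Measure X) [IsFiniteMeasure μ] (f : X → ℝ)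
    (a b : ℝ) : IntegrableOn (fun t => μ.real {x | t ≤ f x}) (Icc a b) := by
  have hanti : Antitone fun t => μ.real {x | t ≤ f x} :=
    fun _ _ hst => measureReal_mono fun _ hx => hst.trans hx
  exact (hanti.antitoneOn _).integrableOn_isCompact isCompact_Icc

variable [IsProbabilityMeasure P] [IsProbabilityMeasure Q]

lemma integral_sub_integral_eq_integral_Ioc {M : ℝ} (hf : Measurable f) (h0 : ∀ x, 0 ≤ f x)
    (hM : ∀ x, f x ≤ M) :
    ∫ x, f x ∂P - ∫ x, f x ∂Q =
      ∫ t in Ioc 0 M, (P.real {x | t ≤ f x} - Q.real {x | t ≤ f x}) := by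
  have layer_cake : ∀ (μ : Measure X) [IsProbabilityMeasure μ],
      ∫ x, f x ∂μ = ∫ t in Ioc 0 M, μ.real {x | t ≤ f x} := fun μ _ =>
    (Integrable.of_mem_Icc 0 M hf.aemeasurable (ae_of_all _ fun x => ⟨h0 x, hM x⟩)
      ).integral_eq_integral_Ioc_meas_le (ae_of_all _ h0) (ae_of_all _ hM)
  have hlevel_integrable : ∀ (μ : Measure X) [IsProbabilityMeasure μ],
      IntegrableOn (fun t => μ.real {x | t ≤ f x}) (Ioc 0 M) := fun μ _ =>
    (integrableOn_measureReal_setOf_le μ f 0 M).mono_set Ioc_subset_Icc_self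
  rw [integral_sub (hlevel_integrable P) (hlevel_integrable Q), layer_cake P, layer_cake Q]

lemma abs_integral_sub_integral_le_mul_tvDist_of_nonneg {M : ℝ} (hf : Measurable f)
    (h0 : ∀ x, 0 ≤ f x) (hM : ∀ x, f x ≤ M) :
    |∫ x, f x ∂P - ∫ x, f x ∂Q| ≤ M * tvDist P Q := by
  have hM0 : 0 ≤ M := by
    obtain ⟨x⟩ := nonempty_of_isProbabilityMeasure P
    exact (h0 x).trans (hM x)
  rw [integral_sub_integral_eq_integral_Ioc P Q hf h0 hM, ← Real.norm_eq_abs]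
  calc _ ≤ tvDist P Q * volume.real (Ioc (0 : ℝ) M) :=
        norm_setIntegral_le_of_norm_le_const measure_Ioc_lt_top fun t _ =>
          abs_measureReal_sub_le_tvDist P Q (measurableSet_le measurable_const hf)
    _ = M * tvDist P Q := by rw [Real.volume_real_Ioc_of_le hM0, sub_zero, mul_comm]

theorem abs_integral_sub_integral_le_mul_tvDist {a b : ℝ} (hf : Measurable f)
    (hab : ∀ x, a ≤ f x ∧ f x ≤ b) :
    |∫ x, f x ∂P - ∫ x, f x ∂Q| ≤ (b - a) * tvDist P Q := by
  have integral_sub_a : ∀ (μ : Measure X) [IsProbabilityMeasure μ],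
      ∫ x, (f x - a) ∂μ = ∫ x, f x ∂μ - a := fun μ _ => by
    rw [integral_sub (Integrable.of_mem_Icc a b hf.aemeasurable (ae_of_all _ hab))
      (integrable_const a), integral_const, probReal_univ, one_smul]
  have hshift := abs_integral_sub_integral_le_mul_tvDist_of_nonneg P Q (hf.sub_const a)
    (fun x => sub_nonneg.2 (hab x).1) (fun x => sub_le_sub_right (hab x).2 a)
  rwa [integral_sub_a P, integral_sub_a Q, sub_sub_sub_cancel_right] at hshift

end LayerCake

theorem summable_and_abs_tsum_pow_mul_le {γ C : ℝ} (hγ : γ ∈ Ico (0 : ℝ) 1) {d τ : ℕ → ℝ}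
    (hτ0 : ∀ i, 0 ≤ τ i) (hτ1 : ∀ i, τ i ≤ 1) (hd : ∀ i, |d i| ≤ C * τ i) :
    Summable (fun i => |γ ^ i * d i|) ∧ Summable (fun i => |(1 - γ) * γ ^ i * τ i|) ∧
      |∑' i, γ ^ i * d i| ≤ (C / (1 - γ)) * ∑' i, (1 - γ) * γ ^ i * τ i := by
  obtain ⟨hγ0, hγ1⟩ := hγ
  have hτ : Summable fun i => γ ^ i * τ i :=
    (summable_geometric_of_lt_one hγ0 hγ1).of_nonneg_of_le
      (fun i => mul_nonneg (pow_nonneg hγ0 i) (hτ0 i))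
      (fun i => mul_le_of_le_one_right (pow_nonneg hγ0 i) (hτ1 i))
  have hterm : ∀ i, |γ ^ i * d i| ≤ C * (γ ^ i * τ i) := fun i => by
    rw [abs_mul, abs_of_nonneg (pow_nonneg hγ0 i), mul_left_comm]
    exact mul_le_mul_of_nonneg_left (hd i) (pow_nonneg hγ0 i)
  have hrhs : (C / (1 - γ)) * ∑' i, (1 - γ) * γ ^ i * τ i = ∑' i, C * (γ ^ i * τ i) := by
    simp_rw [mul_assoc, tsum_mul_left]
    field_simp [(sub_pos.2 hγ1).ne']
  refine ⟨(hτ.mul_left C).of_nonneg_of_le (fun _ => abs_nonneg _) hterm,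
    ((hτ.mul_left (1 - γ)).congr fun i => (mul_assoc _ _ _).symm).abs, ?_⟩
  rw [hrhs]
  exact tsum_of_norm_bounded (f := fun i => γ ^ i * d i) (hτ.mul_left C).hasSum hterm

theorem tsum_discounted_integral_diff_le_general {X : ℕ → Type*} [∀ i, MeasurableSpace (X i)]
    (γ : ℝ) (hγ : γ ∈ Set.Ico (0 : ℝ) 1)
    (rmin rmax : ℝ)
    (P Q : ∀ i, Measure (X i))
    [∀ i, IsProbabilityMeasure (P i)] [∀ i, IsProbabilityMeasure (Q i)]
    (r : ∀ i, X i → ℝ) (hmeas : ∀ i, Measurable (r i))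
    (hbound : ∀ i x, rmin ≤ r i x ∧ r i x ≤ rmax) :
    Summable (fun i => |γ ^ i * ((∫ x, r i x ∂(P i)) - ∫ x, r i x ∂(Q i))|) ∧
    Summable (fun i => |(1 - γ) * γ ^ i * tvDist (P i) (Q i)|) ∧
    |∑' i, γ ^ i * ((∫ x, r i x ∂(P i)) - ∫ x, r i x ∂(Q i))| ≤
      ((rmax - rmin) / (1 - γ)) * ∑' i, (1 - γ) * γ ^ i * tvDist (P i) (Q i) :=
  summable_and_abs_tsum_pow_mul_le hγ (fun i => tvDist_nonneg (P i) (Q i))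
    (fun i => tvDist_le_one (P i) (Q i))
    fun i => abs_integral_sub_integral_le_mul_tvDist (P i) (Q i) (hmeas i) (hbound i)

/-- For `γ ∈ [0,1)`, bounded measurable rewards `r_i` and probability measures `P_i, Q_i`,
`|∑ γ^i (∫ r_i dP_i − ∫ r_i dQ_i)| ≤ ((r_max − r_min)/(1 − γ)) ∑ (1−γ) γ^i TV(P_i,Q_i)`,
with both series converging absolutely. -/
theorem tsum_discounted_integral_diff_le {X : ℕ → Type*} [∀ i, MeasurableSpace (X i)]
    (γ : ℝ) (hγ : γ ∈ Set.Ico (0 : ℝ) 1)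
    (rmin rmax : ℝ) (hr : rmin ≤ rmax)
    (P Q : ∀ i, Measure (X i))
    [∀ i, IsProbabilityMeasure (P i)] [∀ i, IsProbabilityMeasure (Q i)]
    (r : ∀ i, X i → ℝ) (hmeas : ∀ i, Measurable (r i))
    (hbound : ∀ i x, rmin ≤ r i x ∧ r i x ≤ rmax) :
    Summable (fun i => |γ ^ i * ((∫ x, r i x ∂(P i)) - ∫ x, r i x ∂(Q i))|) ∧
    Summable (fun i => |(1 - γ) * γ ^ i * tvDist (P i) (Q i)|) ∧
    |∑' i, γ ^ i * ((∫ x, r i x ∂(P i)) - ∫ x, r i x ∂(Q i))| ≤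
      ((rmax - rmin) / (1 - γ)) * ∑' i, (1 - γ) * γ ^ i * tvDist (P i) (Q i) :=
  tsum_discounted_integral_diff_le_general γ hγ rmin rmax P Q r hmeas hbound
end

section
/- Let P be a probability measure on a measurable space X, let (Θ, Π) be a probability space, and let θ ↦ Q_θ be a measurable family of probability measures on X (a Markov kernel from Θ to X). Let Q̄ := ∫ Q_θ dΠ(θ) be the mixture measure (the bind of Π along the kernel). Then KL(P ‖ Q̄) ≤ ∫ KL(P ‖ Q_θ) dΠ(θ). -/
open MeasureTheory ProbabilityTheory
open scoped ENNReal Classical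

/-!
Write `ν` for the mixture. Applying `log a ≤ log b + a / b - 1` pointwise to `a = dP/dν`
and `b = dP/dQ_θ`, and using `∫ (dP/dν) / (dP/dQ_θ) dP ≤ ∫ dP/dν dQ_θ`, gives for every `θ`
`KL(P ‖ ν) + 1 ≤ KL(P ‖ Q_θ) + ∫ dP/dν dQ_θ`.
Averaging over `Π`, the last term becomes `∫ dP/dν dν ≤ 1`. Absolute continuity `P ≪ ν`,
needed to start, holds as soon as the right-hand side is finite, since then `P ≪ Q_θ`
for `Π`-a.e. `θ`.
-/

/-- Kullback–Leibler divergence: `∫ log(dP/dQ) dP` when `P ≪ Q` (and the log-likelihood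
ratio is integrable), and `+∞` otherwise. -/
noncomputable def klDiv {X : Type*} [MeasurableSpace X] (P Q : Measure X) : ℝ≥0∞ :=
  if P ≪ Q ∧ Integrable (llr P Q) P then ENNReal.ofReal (∫ x, llr P Q x ∂P) else ⊤

section LogLikelihoodRatio

variable {X : Type*} [MeasurableSpace X] {μ ν ξ : Measure X}

lemma lintegral_div_rnDeriv_le [μ.HaveLebesgueDecomposition ν] (hμν : μ ≪ ν)
    {f : X → ℝ≥0∞} (hf : AEMeasurable f ν) : ∫⁻ x, f x / μ.rnDeriv ν x ∂μ ≤ ∫⁻ x, f x ∂ν := by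
  rw [← lintegral_rnDeriv_mul hμν (f := fun x => f x / μ.rnDeriv ν x)
    (hf.div (μ.measurable_rnDeriv ν).aemeasurable)]
  exact lintegral_mono fun x => ENNReal.mul_div_le

lemma integrable_toReal_div_rnDeriv [μ.HaveLebesgueDecomposition ν] (hμν : μ ≪ ν)
    {f : X → ℝ≥0∞} (hf : AEMeasurable f ν) (hf_fin : ∫⁻ x, f x ∂ν ≠ ∞) :
    Integrable (fun x => (f x / μ.rnDeriv ν x).toReal) μ :=
  integrable_toReal_of_lintegral_ne_top
    ((hf.mono_ac hμν).div (μ.measurable_rnDeriv ν).aemeasurable)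
    ((lintegral_div_rnDeriv_le hμν hf).trans_lt hf_fin.lt_top).ne

lemma integral_toReal_div_rnDeriv_le [μ.HaveLebesgueDecomposition ν] (hμν : μ ≪ ν)
    {f : X → ℝ≥0∞} (hf : AEMeasurable f ν) (hf_fin : ∫⁻ x, f x ∂ν ≠ ∞) :
    ∫ x, (f x / μ.rnDeriv ν x).toReal ∂μ ≤ (∫⁻ x, f x ∂ν).toReal := by
  rw [integral_eq_lintegral_of_nonneg_ae (ae_of_all _ fun _ => ENNReal.toReal_nonneg)
    (integrable_toReal_div_rnDeriv hμν hf hf_fin).aestronglyMeasurable]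
  refine ENNReal.toReal_mono hf_fin ((lintegral_mono fun x => ?_).trans
    (lintegral_div_rnDeriv_le hμν hf))
  exact ENNReal.ofReal_toReal_le

lemma one_sub_toReal_one_div_rnDeriv_le_llr [SigmaFinite μ] [μ.HaveLebesgueDecomposition ν]
    (hμν : μ ≪ ν) : ∀ᵐ x ∂μ, 1 - (1 / μ.rnDeriv ν x).toReal ≤ llr μ ν x := by
  filter_upwards [Measure.rnDeriv_pos hμν, hμν.ae_le (Measure.rnDeriv_lt_top μ ν)]
    with x hpos hlt
  rw [ENNReal.toReal_div, ENNReal.toReal_one, one_div]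
  exact Real.one_sub_inv_le_log_of_pos (ENNReal.toReal_pos hpos.ne' hlt.ne)

lemma llr_le_llr_add_toReal_div_sub_one [SigmaFinite μ] [μ.HaveLebesgueDecomposition ν]
    [μ.HaveLebesgueDecomposition ξ] (hμν : μ ≪ ν) (hμξ : μ ≪ ξ) :
    ∀ᵐ x ∂μ, llr μ ν x ≤ llr μ ξ x + ((μ.rnDeriv ν x / μ.rnDeriv ξ x).toReal - 1) := by
  filter_upwards [Measure.rnDeriv_pos hμν, hμν.ae_le (Measure.rnDeriv_lt_top μ ν),
    Measure.rnDeriv_pos hμξ, hμξ.ae_le (Measure.rnDeriv_lt_top μ ξ)]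
    with x hν₀ hν hξ₀ hξ
  have ha := ENNReal.toReal_pos hν₀.ne' hν.ne
  have hb := ENNReal.toReal_pos hξ₀.ne' hξ.ne
  have := Real.log_le_sub_one_of_pos (div_pos ha hb)
  rw [Real.log_div ha.ne' hb.ne'] at this
  rw [llr_def, llr_def, ENNReal.toReal_div]
  linarith

lemma integrable_llr_of_lintegral_rnDeriv_ne_top [IsFiniteMeasure μ] [IsFiniteMeasure ν]
    [SigmaFinite ξ] (hμν : μ ≪ ν) (hμξ : μ ≪ ξ) (hξ_int : Integrable (llr μ ξ) μ)
    (hc : ∫⁻ x, μ.rnDeriv ν x ∂ξ ≠ ∞) : Integrable (llr μ ν) μ :=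
  integrable_of_le_of_le (stronglyMeasurable_llr μ ν).aestronglyMeasurable
    (one_sub_toReal_one_div_rnDeriv_le_llr hμν) (llr_le_llr_add_toReal_div_sub_one hμν hμξ)
    ((integrable_const 1).sub
      (integrable_toReal_div_rnDeriv hμν aemeasurable_const (by simp [measure_ne_top])))
    (hξ_int.add
      ((integrable_toReal_div_rnDeriv hμξ (μ.measurable_rnDeriv ν).aemeasurable hc).sub
        (integrable_const 1)))

lemma integral_llr_le [IsProbabilityMeasure μ] [SigmaFinite ν] [SigmaFinite ξ]
    (hμν : μ ≪ ν) (hμξ : μ ≪ ξ) (hν_int : Integrable (llr μ ν) μ)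
    (hξ_int : Integrable (llr μ ξ) μ) (hc : ∫⁻ x, μ.rnDeriv ν x ∂ξ ≠ ∞) :
    ∫ x, llr μ ν x ∂μ ≤ ∫ x, llr μ ξ x ∂μ + (∫⁻ x, μ.rnDeriv ν x ∂ξ).toReal - 1 := by
  have hr := integrable_toReal_div_rnDeriv hμξ (μ.measurable_rnDeriv ν).aemeasurable hc
  have hr₁ : Integrable (fun x => (μ.rnDeriv ν x / μ.rnDeriv ξ x).toReal - 1) μ :=
    hr.sub (integrable_const 1)
  calc ∫ x, llr μ ν x ∂μ
      ≤ ∫ x, llr μ ξ x + ((μ.rnDeriv ν x / μ.rnDeriv ξ x).toReal - 1) ∂μ :=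
        integral_mono_ae hν_int (hξ_int.add hr₁)
          (llr_le_llr_add_toReal_div_sub_one hμν hμξ)
    _ = ∫ x, llr μ ξ x ∂μ + ∫ x, (μ.rnDeriv ν x / μ.rnDeriv ξ x).toReal ∂μ - 1 := by
        rw [integral_add hξ_int hr₁, integral_sub hr (integrable_const 1)]
        simp [add_sub_assoc]
    _ ≤ _ := by
        gcongr
        exact integral_toReal_div_rnDeriv_le hμξ (μ.measurable_rnDeriv ν).aemeasurable hc

end LogLikelihoodRatio

section KLDivergence

variable {X : Type*} [MeasurableSpace X] {μ ν ξ : Measure X}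

lemma klDiv_of_ac_of_integrable (hμν : μ ≪ ν) (h_int : Integrable (llr μ ν) μ) :
    klDiv μ ν = ENNReal.ofReal (∫ x, llr μ ν x ∂μ) :=
  if_pos ⟨hμν, h_int⟩

lemma klDiv_add_one_le [IsProbabilityMeasure μ] [IsProbabilityMeasure ν] [SigmaFinite ξ]
    (hμν : μ ≪ ν) : klDiv μ ν + 1 ≤ klDiv μ ξ + ∫⁻ x, μ.rnDeriv ν x ∂ξ := by
  by_cases hξ : μ ≪ ξ ∧ Integrable (llr μ ξ) μ
  swap
  · simp [klDiv, hξ]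
  by_cases hc : ∫⁻ x, μ.rnDeriv ν x ∂ξ = ∞
  · simp [hc]
  obtain ⟨hμξ, hξ_int⟩ := hξ
  have hν_int := integrable_llr_of_lintegral_rnDeriv_ne_top hμν hμξ hξ_int hc
  have h_nonneg : 0 ≤ ∫ x, llr μ ν x ∂μ := by
    simpa using InformationTheory.integral_llr_add_sub_measure_univ_nonneg hμν hν_int
  have h_le := integral_llr_le hμν hμξ hν_int hξ_int hc
  rw [klDiv_of_ac_of_integrable hμν hν_int, klDiv_of_ac_of_integrable hμξ hξ_int]
  calc ENNReal.ofReal (∫ x, llr μ ν x ∂μ) + 1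
      = ENNReal.ofReal (∫ x, llr μ ν x ∂μ + 1) := by
        rw [ENNReal.ofReal_add h_nonneg zero_le_one, ENNReal.ofReal_one]
    _ ≤ ENNReal.ofReal (∫ x, llr μ ξ x ∂μ + (∫⁻ x, μ.rnDeriv ν x ∂ξ).toReal) :=
        ENNReal.ofReal_le_ofReal (by linarith)
    _ ≤ ENNReal.ofReal (∫ x, llr μ ξ x ∂μ) + ∫⁻ x, μ.rnDeriv ν x ∂ξ := by
        grw [ENNReal.ofReal_add_le, ENNReal.ofReal_toReal hc]

end KLDivergence

section Mixture

variable {X Θ : Type*} [MeasurableSpace X] [MeasurableSpace Θ] {P : Measure X}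
  {prior : Measure Θ} {Q : Θ → Measure X}

lemma absolutelyContinuous_bind_of_lintegral_klDiv_ne_top [NeZero prior]
    (hQ : AEMeasurable Q prior) (h : ∫⁻ θ, klDiv P (Q θ) ∂prior ≠ ∞) : P ≪ prior.bind Q := by
  refine Measure.AbsolutelyContinuous.mk fun s hs hs_null => ?_
  by_contra hPs
  have hQs : AEMeasurable (fun θ => Q θ s) prior :=
    (Measure.measurable_coe hs).comp_aemeasurable hQ
  rw [Measure.bind_apply hs hQ, lintegral_eq_zero_iff' hQs] at hs_null
  have h_top : ∀ᵐ θ ∂prior, klDiv P (Q θ) = ∞ := by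
    filter_upwards [hs_null] with θ hθ
    exact if_neg fun h => hPs (h.1 hθ)
  simp [lintegral_congr_ae h_top, NeZero.ne prior] at h

lemma lintegral_lintegral_rnDeriv_bind_le (hQ : AEMeasurable Q prior) :
    ∫⁻ θ, ∫⁻ x, P.rnDeriv (prior.bind Q) x ∂Q θ ∂prior ≤ P Set.univ := by
  rw [← Measure.lintegral_bind hQ (P.measurable_rnDeriv _).aemeasurable]
  exact Measure.lintegral_rnDeriv_le

end Mixture

/-- Convexity of the KL divergence in its second argument (Jensen's inequality):
for a mixture `Q̄ = ∫ Q_θ dΠ(θ)` of a measurable family of probability measures,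
`KL(P ‖ Q̄) ≤ ∫ KL(P ‖ Q_θ) dΠ(θ)`. -/
theorem klDiv_mixture_le {X Θ : Type*} [MeasurableSpace X] [MeasurableSpace Θ]
    (P : Measure X) [IsProbabilityMeasure P]
    (prior : Measure Θ) [IsProbabilityMeasure prior]
    (Q : Kernel Θ X) [IsMarkovKernel Q] :
    klDiv P (prior.bind fun θ => Q θ) ≤ ∫⁻ θ, klDiv P (Q θ) ∂prior := by
  set ν := prior.bind fun θ => Q θ
  by_cases h_top : ∫⁻ θ, klDiv P (Q θ) ∂prior = ∞
  · simp [h_top]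
  have hPν : P ≪ ν := absolutelyContinuous_bind_of_lintegral_klDiv_ne_top Q.aemeasurable h_top
  have : IsProbabilityMeasure ν :=
    isProbabilityMeasure_bind Q.aemeasurable (ae_of_all _ inferInstance)
  have h_mass : ∫⁻ θ, ∫⁻ x, P.rnDeriv ν x ∂Q θ ∂prior ≤ 1 :=
    (lintegral_lintegral_rnDeriv_bind_le Q.aemeasurable).trans_eq measure_univ
  refine (ENNReal.add_le_add_iff_right ENNReal.one_ne_top).mp ?_
  calc klDiv P ν + 1 = ∫⁻ _, klDiv P ν + 1 ∂prior := by simp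
    _ ≤ ∫⁻ θ, klDiv P (Q θ) + ∫⁻ x, P.rnDeriv ν x ∂Q θ ∂prior :=
        lintegral_mono fun θ => klDiv_add_one_le hPν
    _ = ∫⁻ θ, klDiv P (Q θ) ∂prior + ∫⁻ θ, ∫⁻ x, P.rnDeriv ν x ∂Q θ ∂prior :=
        lintegral_add_right' _
          ((Measure.measurable_lintegral (P.measurable_rnDeriv ν)).comp_aemeasurable Q.aemeasurable)
    _ ≤ ∫⁻ θ, klDiv P (Q θ) ∂prior + 1 := by gcongr
end

section
/- Let (Θ, μ) be a probability space, and for each N ∈ ℕ let ℓ_N : Θ → ℝ be a bounded measurable function. Let A and B be disjoint measurable subsets of Θ with μ(A) > 0 and μ(B) > 0, let c > 0 and N' ∈ ℕ, and suppose that for all N ≥ N', sup_{θ ∈ A} ℓ_N(θ) + c ≤ inf_{θ ∈ B} ℓ_N(θ). Define the posterior mass ν_N(A) := (∫_A exp(N ℓ_N(θ)) dμ(θ)) / (∫_Θ exp(N ℓ_N(θ)) dμ(θ)). Then for every N ≥ N', ν_N(A) ≤ (μ(A)/μ(B)) · exp(−c N). -/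
/-!
On `A` the likelihood weight `exp (N ℓ_N)` is at most `exp (N sup_A ℓ_N)`, while on `B` it is at
least `exp (N (sup_A ℓ_N + c))`. Bounding the numerator by its value on `A` and the evidence
from below by its part over `B`, the ratio of the two bounds is `μ(A)/μ(B) · exp (-c N)`.
-/

open MeasureTheory Real

section

variable {Θ : Type*} [MeasurableSpace Θ] {μ : Measure Θ} {f : Θ → ℝ} {s t : Set Θ} {a b : ℝ}

theorem setIntegral_le_measureReal_mul (hf : IntegrableOn f s μ) (hμs : μ s ≠ ⊤)
    (hs : MeasurableSet s) (hfs : ∀ x ∈ s, f x ≤ a) :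
    ∫ x in s, f x ∂μ ≤ μ.real s * a := by
  calc ∫ x in s, f x ∂μ ≤ ∫ _ in s, a ∂μ := setIntegral_mono_on hf (integrableOn_const hμs) hs hfs
    _ = μ.real s * a := by rw [setIntegral_const, smul_eq_mul]

theorem setIntegral_div_integral_le [IsFiniteMeasure μ] (hf : Integrable f μ) (hf₀ : 0 ≤ f)
    (hs : MeasurableSet s) (ht : MeasurableSet t) (hμt : μ t ≠ 0) (hb : 0 < b)
    (hfs : ∀ x ∈ s, f x ≤ a) (hft : ∀ x ∈ t, b ≤ f x) :
    (∫ x in s, f x ∂μ) / ∫ x, f x ∂μ ≤ μ.real s / μ.real t * (a / b) := by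
  have hμt_pos : 0 < μ.real t * b := mul_pos (ENNReal.toReal_pos hμt (measure_ne_top μ t)) hb
  have hden : μ.real t * b ≤ ∫ x, f x ∂μ :=
    calc μ.real t * b = b * μ.real t := mul_comm _ _
      _ ≤ ∫ x in t, f x ∂μ :=
        setIntegral_ge_of_const_le_real ht (measure_ne_top μ t) hft hf.integrableOn
      _ ≤ ∫ x, f x ∂μ := setIntegral_le_integral hf (.of_forall hf₀)
  calc (∫ x in s, f x ∂μ) / ∫ x, f x ∂μ
      ≤ (∫ x in s, f x ∂μ) / (μ.real t * b) :=
        div_le_div_of_nonneg_left (setIntegral_nonneg hs fun x _ ↦ hf₀ x) hμt_pos hden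
    _ ≤ μ.real s * a / (μ.real t * b) :=
        div_le_div_of_nonneg_right
          (setIntegral_le_measureReal_mul hf.integrableOn (measure_ne_top μ s) hs hfs) hμt_pos.le
    _ = μ.real s / μ.real t * (a / b) := mul_div_mul_comm _ _ _ _

end

theorem posterior_mass_le_exp_general {Θ : Type*} [MeasurableSpace Θ]
    (μ : Measure Θ) [IsProbabilityMeasure μ]
    (ℓ : ℕ → Θ → ℝ) (hmeas : ∀ N, Measurable (ℓ N))
    (hbdd : ∀ N, ∃ C, ∀ θ, |ℓ N θ| ≤ C)
    (A B : Set Θ) (hA : MeasurableSet A) (hB : MeasurableSet B)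
    (hμB : 0 < μ B)
    (c : ℝ) (N' : ℕ)
    (hsep : ∀ N ≥ N', sSup (ℓ N '' A) + c ≤ sInf (ℓ N '' B)) :
    ∀ N ≥ N',
      (∫ θ in A, Real.exp ((N : ℝ) * ℓ N θ) ∂μ) / (∫ θ, Real.exp ((N : ℝ) * ℓ N θ) ∂μ) ≤
        ((μ A).toReal / (μ B).toReal) * Real.exp (-c * (N : ℝ)) := by
  intro N hN
  obtain ⟨C, hC⟩ := hbdd N
  have hbddA : BddAbove (ℓ N '' A) := ⟨C, by rintro _ ⟨θ, -, rfl⟩; exact (abs_le.1 (hC θ)).2⟩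
  have hbddB : BddBelow (ℓ N '' B) := ⟨-C, by rintro _ ⟨θ, -, rfl⟩; exact (abs_le.1 (hC θ)).1⟩
  set M := sSup (ℓ N '' A)
  have hle_A : ∀ θ ∈ A, exp (N * ℓ N θ) ≤ exp (N * M) := fun θ hθ ↦ by
    gcongr
    exact le_csSup hbddA ⟨θ, hθ, rfl⟩
  have hge_B : ∀ θ ∈ B, exp (N * (M + c)) ≤ exp (N * ℓ N θ) := fun θ hθ ↦ by
    gcongr
    exact (hsep N hN).trans (csInf_le hbddB ⟨θ, hθ, rfl⟩)
  have hint : Integrable (fun θ ↦ exp (N * ℓ N θ)) μ :=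
    ProbabilityTheory.integrable_exp_mul_of_le _ C N.cast_nonneg (hmeas N).aemeasurable
      (.of_forall fun θ ↦ (abs_le.1 (hC θ)).2)
  have key := setIntegral_div_integral_le hint (fun θ ↦ (exp_pos _).le) hA hB hμB.ne'
    (exp_pos _) hle_A hge_B
  rwa [← exp_sub, show (N : ℝ) * M - N * (M + c) = -c * N by ring] at key

/-- Posterior tail contraction: if for all `N ≥ N'` the log-likelihoods on `A` are at least
`c` below those on `B`, then the posterior mass of `A`,
`ν_N(A) = (∫_A e^{N ℓ_N} dμ) / (∫_Θ e^{N ℓ_N} dμ)`, satisfies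
`ν_N(A) ≤ (μ(A)/μ(B)) e^{−cN}` for all `N ≥ N'`. -/
theorem posterior_mass_le_exp {Θ : Type*} [MeasurableSpace Θ]
    (μ : Measure Θ) [IsProbabilityMeasure μ]
    (ℓ : ℕ → Θ → ℝ) (hmeas : ∀ N, Measurable (ℓ N))
    (hbdd : ∀ N, ∃ C, ∀ θ, |ℓ N θ| ≤ C)
    (A B : Set Θ) (hA : MeasurableSet A) (hB : MeasurableSet B) (hAB : Disjoint A B)
    (hμA : 0 < μ A) (hμB : 0 < μ B)
    (c : ℝ) (hc : 0 < c) (N' : ℕ)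
    (hsep : ∀ N ≥ N', sSup (ℓ N '' A) + c ≤ sInf (ℓ N '' B)) :
    ∀ N ≥ N',
      (∫ θ in A, Real.exp ((N : ℝ) * ℓ N θ) ∂μ) / (∫ θ, Real.exp ((N : ℝ) * ℓ N θ) ∂μ) ≤
        ((μ A).toReal / (μ B).toReal) * Real.exp (-c * (N : ℝ)) :=
  posterior_mass_le_exp_general μ ℓ hmeas hbdd A B hA hB hμB c N' hsep
end
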